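/- Let n ≥ 3 and X a set. Then any two 0-distinguishing tuples v, w : n → X with {v_k | 1 ≤ k < n} = {w_k | 1 ≤ k < n} can be transformed into one another by a finite sequence of operations of the form u ↦ u∘[0/k]∘[k/j]∘[j/0] (swapping the entries at positions j and k via position 0), together with changes of the entry at position 0. -/
import Mathlib


/-- `sub i j : n → n` maps `i` to `j` and fixes every other element. -/
def sub {n : ℕ} (i j : Fin n) : Fin n → Fin n := fun k => if k = i then j else k

/-- One allowed move on tuples: either a swap of the entries at positions `j`
and `k` via position `0` (composition with `[0/k]∘[k/j]∘[j/0]`), or a change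
of the entry at position `0` only. -/
def TupleStep {n : ℕ} [NeZero n] {X : Type*} (u u' : Fin n → X) : Prop :=
  (∃ j k : Fin n, u' = u ∘ sub 0 k ∘ sub k j ∘ sub j 0) ∨
  (∀ m : Fin n, m ≠ 0 → u' m = u m)

/-- Applying a permutation of the nonzero indices to a tuple, keeping entry 0. -/
def permApply {n : ℕ} [NeZero n] {X : Type*} (e : Equiv.Perm {m : Fin n // m ≠ 0})
    (u : Fin n → X) : Fin n → X :=
  fun m => if h : m = 0 then u 0 else u (e ⟨m, h⟩)

lemma step_swap {n : ℕ} [NeZero n] {X : Type*} (u : Fin n → X)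
    (j k : Fin n) (hj : j ≠ 0) (hk : k ≠ 0) (hjk : j ≠ k) :
    Relation.ReflTransGen TupleStep u
      (fun m => if m = j then u k else if m = k then u j else u m) := by
  have h1 : TupleStep u (u ∘ sub 0 k ∘ sub k j ∘ sub j 0) := Or.inl ⟨j, k, rfl⟩
  have h2 : TupleStep (u ∘ sub 0 k ∘ sub k j ∘ sub j 0)
      (fun m => if m = j then u k else if m = k then u j else u m) := by
    right
    intro m hm
    simp only [Function.comp, sub]
    by_cases hmj : m = j
    · subst hmj
      simp [Ne.symm hk]
    · by_cases hmk : m = k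
      · subst hmk
        simp [hmj, hjk, hj, Ne.symm hjk]
      · simp [hmj, hmk, hm]
  exact Relation.ReflTransGen.head h1 (Relation.ReflTransGen.single h2)

lemma perm_reach {n : ℕ} [NeZero n] {X : Type*} (e : Equiv.Perm {m : Fin n // m ≠ 0}) :
    ∀ u : Fin n → X, Relation.ReflTransGen TupleStep u (permApply e u) := by
  refine Equiv.Perm.swap_induction_on e ?_ ?_
  · intro u
    have h : permApply (1 : Equiv.Perm {m : Fin n // m ≠ 0}) u = u := by
      funext m
      by_cases h : m = 0 <;> simp [permApply, h]
    rw [h]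
  · intro f x y hxy ih u
    have hx : x.val ≠ 0 := x.2
    have hy : y.val ≠ 0 := y.2
    have hxyv : x.val ≠ y.val := fun h => hxy (Subtype.ext h)
    have e1 : permApply (Equiv.swap x y) u =
        fun m => if m = x.val then u y.val else if m = y.val then u x.val else u m := by
      funext m
      by_cases h0 : m = 0
      · subst h0
        simp [permApply, Ne.symm hx, Ne.symm hy]
      · by_cases hmx : m = x.val
        · have hx2 : (⟨m, h0⟩ : {m : Fin n // m ≠ 0}) = x := Subtype.ext hmx
          simp [permApply, h0, hx2, hmx, hx, Equiv.swap_apply_left]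
        · by_cases hmy : m = y.val
          · have hy2 : (⟨m, h0⟩ : {m : Fin n // m ≠ 0}) = y := Subtype.ext hmy
            simp [permApply, h0, hy2, hmx, hmy, hy, Ne.symm hxyv, Equiv.swap_apply_right]
          · have hne1 : (⟨m, h0⟩ : {m : Fin n // m ≠ 0}) ≠ x :=
              fun h => hmx (congrArg Subtype.val h)
            have hne2 : (⟨m, h0⟩ : {m : Fin n // m ≠ 0}) ≠ y :=
              fun h => hmy (congrArg Subtype.val h)
            simp [permApply, h0, hmx, hmy, Equiv.swap_apply_of_ne_of_ne hne1 hne2]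
    have e2 : permApply (Equiv.swap x y * f) u = permApply f (permApply (Equiv.swap x y) u) := by
      funext m
      by_cases h0 : m = 0
      · subst h0
        simp [permApply]
      · have hne : ((f ⟨m, h0⟩ : {m : Fin n // m ≠ 0}) : Fin n) ≠ 0 := (f ⟨m, h0⟩).2
        simp only [permApply, dif_neg h0, dif_neg hne, Equiv.Perm.mul_apply]
    rw [e2]
    exact Relation.ReflTransGen.trans
      (by rw [e1]; exact step_swap u x.val y.val hx hy hxyv) (ih _)

/-- Any two `0`-distinguishing tuples `v, w : n → X` with the same set of
entries off position `0` can be transformed into one another by a finite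
sequence of swaps-via-`0` and changes of the entry at position `0`. -/
theorem stmt_17 {n : ℕ} [NeZero n] (hn : 3 ≤ n) {X : Type*} (v w : Fin n → X)
    (hv : ∀ k l : Fin n, k ≠ 0 → l ≠ 0 → k ≠ l → v k ≠ v l)
    (hw : ∀ k l : Fin n, k ≠ 0 → l ≠ 0 → k ≠ l → w k ≠ w l)
    (him : v '' {k : Fin n | k ≠ 0} = w '' {k : Fin n | k ≠ 0}) :
    Relation.ReflTransGen TupleStep v w := by
  have hmem : ∀ s : {m : Fin n // m ≠ 0}, ∃ t : Fin n, t ≠ 0 ∧ v t = w s.val := by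
    intro s
    have h : w s.val ∈ v '' {k : Fin n | k ≠ 0} := by
      rw [him]; exact ⟨s.val, s.2, rfl⟩
    obtain ⟨t, ht, hvt⟩ := h
    exact ⟨t, ht, hvt⟩
  choose g hg0 hgv using hmem
  set G : {m : Fin n // m ≠ 0} → {m : Fin n // m ≠ 0} := fun s => ⟨g s, hg0 s⟩ with hG
  have hGinj : Function.Injective G := by
    intro s s' h
    by_contra hne
    have hval : s.val ≠ s'.val := fun hh => hne (Subtype.ext hh)
    have hws : w s.val ≠ w s'.val := hw s.val s'.val s.2 s'.2 hval
    apply hws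
    rw [← hgv s, ← hgv s']
    exact congrArg (fun t => v t.val) h
  have hGbij : Function.Bijective G := Finite.injective_iff_bijective.mp hGinj
  set e : Equiv.Perm {m : Fin n // m ≠ 0} := Equiv.ofBijective G hGbij with he
  have h1 : Relation.ReflTransGen TupleStep v (permApply e v) := perm_reach e v
  have h2 : TupleStep (permApply e v) w := by
    right
    intro m hm
    have hEG : e ⟨m, hm⟩ = G ⟨m, hm⟩ := rfl
    simp only [permApply, dif_neg hm, hEG, hG]
    exact (hgv ⟨m, hm⟩).symm
  exact h1.tail h2
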